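/- arXiv:1606.01766 — 6 statements merged into one kernel-verified Lean document; each statement's English description precedes it below -/
import Mathlib

section
/- Let F be a field, let n, s ≥ 1, let σ ∈ {1,−1}, and let λB+A be an arbitrary pencil of size (s+1)n×(s+1)n over F. Let L(λ) be the associated block Kronecker pencil and define the n×n matrix polynomial P(λ) := (Λ_s(λ)^T⊗I_n)(λB+A)(Λ_s(λ)⊗I_n), regarded as a polynomial of grade 2s+1. Then L(λ) is a strong linearization of P(λ): there exist unimodular U(λ), V(λ) of size (2s+1)n with U(λ)L(λ)V(λ) = diag(I_{2sn}, P(λ)), and there exist unimodular U′(λ), V′(λ) with U′(λ)(rev_1 L)(λ)V′(λ) = diag(I_{2sn}, rev_{2s+1} P(λ)). -/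
open Polynomial Matrix
open scoped Kronecker

noncomputable section

/-- Entrywise inclusion of a constant matrix into polynomial matrices. -/
def matC {F : Type} [Field F] {m l : Type*} (M : Matrix m l F) : Matrix m l (Polynomial F) :=
  M.map fun a => (C a : Polynomial F)

/-- The pencil `λ ↦ A + λ B`, represented as a matrix over `F[λ]`. -/
def pencil {F : Type} [Field F] {m l : Type*} (A B : Matrix m l F) :
    Matrix m l (Polynomial F) :=
  matC A + (X : Polynomial F) • matC B

/-- Grade-`g` reversal `rev_g`, applied entrywise. -/
def revMat {F : Type} [Field F] {m l : Type*} (g : ℕ) (M : Matrix m l (Polynomial F)) :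
    Matrix m l (Polynomial F) :=
  M.map fun q => q.reflect g

/-- Entrywise evaluation of a polynomial matrix at a point. -/
def evalMat {F : Type} [Field F] {m l : Type*} (a : F) (M : Matrix m l (Polynomial F)) :
    Matrix m l F :=
  M.map fun q => q.eval a

/-- The matrix polynomial `P(λ) = ∑_{k=0}^d λ^k P_k` built from its coefficients. -/
def polyOfCoeffs {F : Type} [Field F] {n : ℕ} (d : ℕ) (Pc : ℕ → Matrix (Fin n) (Fin n) F) :
    Matrix (Fin n) (Fin n) (Polynomial F) :=
  ∑ k ∈ Finset.range (d + 1), (X : Polynomial F) ^ k • matC (Pc k)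

/-- The `(i,j)` block of a block-partitioned matrix. -/
def blk {α p q n m : Type*} (A : Matrix (p × n) (q × m) α) (i : p) (j : q) :
    Matrix n m α :=
  Matrix.of fun r c => A (i, r) (j, c)

/-- `Λ_s(λ) ⊗ I_n`, an `(s+1)n × n` polynomial matrix whose `i`-th block is `λ^{s-i} I_n`. -/
def Lam (F : Type) [Field F] (s n : ℕ) :
    Matrix (Fin (s+1) × Fin n) (Fin n) (Polynomial F) :=
  Matrix.of fun p c => if p.2 = c then (X : Polynomial F) ^ (s - (p.1 : ℕ)) else 0

/-- The pencil `L_s(λ) ∈ F[λ]^{s×(s+1)}` with `-1` on the diagonal and `λ` on the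
superdiagonal. -/
def Lpen (F : Type) [Field F] (s : ℕ) : Matrix (Fin s) (Fin (s+1)) (Polynomial F) :=
  Matrix.of fun i j =>
    if (j : ℕ) = (i : ℕ) then -1 else if (j : ℕ) = (i : ℕ) + 1 then X else 0

/-- The block Kronecker pencil `[[λB+A, L_s(λ)ᵀ⊗I_n],[σ L_s(λ)⊗I_n, 0]]` associated with a
pencil `M = λB+A` of size `(s+1)n × (s+1)n`. -/
def blockKron (F : Type) [Field F] (s n : ℕ) (σ : F)
    (M : Matrix (Fin (s+1) × Fin n) (Fin (s+1) × Fin n) (Polynomial F)) :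
    Matrix ((Fin (s+1) × Fin n) ⊕ (Fin s × Fin n)) ((Fin (s+1) × Fin n) ⊕ (Fin s × Fin n))
      (Polynomial F) :=
  Matrix.fromBlocks M (Lpen F s ⊗ₖ (1 : Matrix (Fin n) (Fin n) (Polynomial F)))ᵀ
    (σ • (Lpen F s ⊗ₖ (1 : Matrix (Fin n) (Fin n) (Polynomial F)))) 0

/-- `L` is a linearization of `P`: there are unimodular `U`, `V` with
`U L V = diag(I_m, P)` (up to the fixed identification of index sets). -/
def IsLinearization {F : Type} [Field F] (m : ℕ) {ι ρ : Type*} [Fintype ι] [DecidableEq ι]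
    [Fintype ρ] [DecidableEq ρ] (L : Matrix ι ι (Polynomial F))
    (P : Matrix ρ ρ (Polynomial F)) : Prop :=
  ∃ (e : (Fin m ⊕ ρ) ≃ ι) (U V : Matrix ι ι (Polynomial F)),
    IsUnit U.det ∧ IsUnit V.det ∧
      U * L * V =
        (Matrix.fromBlocks (1 : Matrix (Fin m) (Fin m) (Polynomial F)) 0 0 P).submatrix
          e.symm e.symm

/-- The block conditions `∑_{i+j=d+2-k} B_{ij} + ∑_{i+j=d+1-k} A_{ij} = P_k` for
`k = 0,…,d` (blocks are indexed here `0`-based, so `i+j` `1`-based is `i+j+2` `0`-based). -/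
def blockConds {F : Type} [Field F] {s n : ℕ} (d : ℕ) (Pc : ℕ → Matrix (Fin n) (Fin n) F)
    (A B : Matrix (Fin (s+1) × Fin n) (Fin (s+1) × Fin n) F) : Prop :=
  ∀ k, k ≤ d →
    (∑ p ∈ Finset.univ.filter
        (fun p : Fin (s+1) × Fin (s+1) => (p.1 : ℕ) + (p.2 : ℕ) + 2 + k = d + 2),
        blk B p.1 p.2) +
      (∑ p ∈ Finset.univ.filter
        (fun p : Fin (s+1) × Fin (s+1) => (p.1 : ℕ) + (p.2 : ℕ) + 2 + k = d + 1),
        blk A p.1 p.2) = Pc k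

/-- `L̂_t(λ) ⊗ I_n` (with `t = u+1`): first block column zero, remaining block columns
`L_{t-1}(λ) ⊗ I_n`; the column index is split as `Fin n ⊕ (Fin t × Fin n)`. -/
def LhatB (F : Type) [Field F] (u n : ℕ) :
    Matrix (Fin u × Fin n) (Fin n ⊕ Fin (u+1) × Fin n) (Polynomial F) :=
  Matrix.of fun p q =>
    match q with
    | Sum.inl _ => 0
    | Sum.inr c => (Lpen F u ⊗ₖ (1 : Matrix (Fin n) (Fin n) (Polynomial F))) p c

/-- The modified block Kronecker pencil `[[λB+A, L̂_t(λ)ᵀ⊗I_n],[σ L̂_t(λ)⊗I_n, 0]]`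
(with `t = u+1`). -/
def modBK (F : Type) [Field F] (u n : ℕ) (σ : F)
    (M : Matrix (Fin n ⊕ Fin (u+1) × Fin n) (Fin n ⊕ Fin (u+1) × Fin n) (Polynomial F)) :
    Matrix ((Fin n ⊕ Fin (u+1) × Fin n) ⊕ Fin u × Fin n)
      ((Fin n ⊕ Fin (u+1) × Fin n) ⊕ Fin u × Fin n) (Polynomial F) :=
  Matrix.fromBlocks M (LhatB F u n)ᵀ (σ • LhatB F u n) 0

/-- `Λ̂_t(λ) ⊗ I_n` (with `t = u+1`): the `(t+1)n × 2n` polynomial matrix whose transpose has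
block rows `(I_n, 0, …, 0)` and `(0, λ^{t-1}I_n, …, λ I_n, I_n)`. -/
def LamHatB (F : Type) [Field F] (u n : ℕ) :
    Matrix (Fin n ⊕ Fin (u+1) × Fin n) (Fin 2 × Fin n) (Polynomial F) :=
  Matrix.of fun q c =>
    match q with
    | Sum.inl r => if c.1 = 0 ∧ c.2 = r then 1 else 0
    | Sum.inr p => if c.1 = 1 ∧ c.2 = p.2 then (X : Polynomial F) ^ (u - (p.1 : ℕ)) else 0

/-- `Λ̃_t(λ) ⊗ I_n` (with `t = u+1`): the `(t+1)n × 2n` polynomial matrix whose transpose has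
block rows `(I_n, 0, …, 0)` and `(0, I_n, λ I_n, …, λ^{t-1} I_n)`. -/
def LamTildeB (F : Type) [Field F] (u n : ℕ) :
    Matrix (Fin n ⊕ Fin (u+1) × Fin n) (Fin 2 × Fin n) (Polynomial F) :=
  Matrix.of fun q c =>
    match q with
    | Sum.inl r => if c.1 = 0 ∧ c.2 = r then 1 else 0
    | Sum.inr p => if c.1 = 1 ∧ c.2 = p.2 then (X : Polynomial F) ^ (p.1 : ℕ) else 0

/-- A `2n × 2n` matrix assembled from four `n × n` blocks, indexed by `Fin 2 × Fin n`. -/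
def twoBlock {α : Type*} {n : ℕ} (W₁₁ W₁₂ W₂₁ W₂₂ : Matrix (Fin n) (Fin n) α) :
    Matrix (Fin 2 × Fin n) (Fin 2 × Fin n) α :=
  Matrix.of fun p q =>
    if p.1 = 0 then (if q.1 = 0 then W₁₁ p.2 q.2 else W₁₂ p.2 q.2)
    else (if q.1 = 0 then W₂₁ p.2 q.2 else W₂₂ p.2 q.2)

/-- `Λ_t(λ) ⊗ I_n` (with `t = u+1`), over the split row index `Fin n ⊕ (Fin t × Fin n)`:
block entries `λ^t I_n, λ^{t-1} I_n, …, λ I_n, I_n`. -/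
def LamFullB (F : Type) [Field F] (u n : ℕ) :
    Matrix (Fin n ⊕ Fin (u+1) × Fin n) (Fin n) (Polynomial F) :=
  Matrix.of fun q c =>
    match q with
    | Sum.inl r => if r = c then (X : Polynomial F) ^ (u + 1) else 0
    | Sum.inr p => if p.2 = c then (X : Polynomial F) ^ (u - (p.1 : ℕ)) else 0

/-- `N̂_t(λ) = Ĥ_t(λ) ⊗ I_n` (with `t = u+1`): `Ĥ_t ∈ F[λ]^{(t-1)×(t+1)}` has `(i,j)` entry
`λ^{i+1-j}` if `2 ≤ j ≤ i+1` and `0` otherwise. -/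
def NhatB (F : Type) [Field F] (u n : ℕ) :
    Matrix (Fin u × Fin n) (Fin n ⊕ Fin (u+1) × Fin n) (Polynomial F) :=
  Matrix.of fun p q =>
    match q with
    | Sum.inl _ => 0
    | Sum.inr c =>
        if (c.1 : ℕ) ≤ (p.1 : ℕ) ∧ p.2 = c.2 then
          (X : Polynomial F) ^ ((p.1 : ℕ) - (c.1 : ℕ)) else 0

end

/-! Let `K = L_s ⊗ I_n`. Since `L_s Λ_s = 0`, the matrix `Q` that agrees with the identity except
that its last block column is `Λ_s ⊗ I_n` is unimodular (upper unitriangular) and satisfies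
`K Q = [T | 0]` with `T` upper triangular with diagonal `-1`, hence unimodular. Conjugating the
block Kronecker pencil by `diag(Q, I)` gives `[[Qᵀ M Q, [T | 0]ᵀ], [σ [T | 0], 0]]`, where the
last diagonal block of `Qᵀ M Q` is `P`; block elimination against `T` leaves `diag(I_{2sn}, P)`.

For the reversal, reversing the order of the blocks turns `rev₁ L_s` into `-L_s`, so that
`rev₁ L` becomes, up to signs `diag(I, -I)`, the block Kronecker pencil of the reversed and
flipped pencil. The same flip turns `Λ_s` into `rev_s Λ_s`, and `rev` is multiplicative under the
degree bounds `deg Λ_s ≤ s`, `deg (λB + A) ≤ 1`, so the polynomial it linearizes is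
`rev_{2s+1} P`. -/

theorem Polynomial.reflect_sum {R ι : Type*} [Semiring R] (t : Finset ι) (f : ι → R[X])
    (N : ℕ) : reflect N (∑ i ∈ t, f i) = ∑ i ∈ t, reflect N (f i) :=
  map_sum (AddMonoidHom.mk ⟨reflect N, reflect_zero⟩ fun p q => reflect_add p q N) f t

namespace Matrix

variable {R : Type*} [Semiring R] {l m o : Type*} [Fintype m]

theorem natDegree_mul_apply_le {P : Matrix l m R[X]} {Q : Matrix m o R[X]} {a b : ℕ}
    (hP : ∀ i j, (P i j).natDegree ≤ a) (hQ : ∀ i j, (Q i j).natDegree ≤ b) (i : l) (j : o) :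
    ((P * Q) i j).natDegree ≤ a + b :=
  natDegree_sum_le_of_forall_le _ _ fun k _ =>
    natDegree_mul_le.trans (add_le_add (hP i k) (hQ k j))

theorem transpose_submatrix_mul_mul_submatrix (Λ : Matrix m l R) (M : Matrix m m R)
    (e : m ≃ m) :
    (Λ.submatrix e id)ᵀ * M * Λ.submatrix e id = Λᵀ * M.submatrix e.symm e.symm * Λ := by
  calc (Λ.submatrix e id)ᵀ * M * Λ.submatrix e id
      = Λᵀ.submatrix id e * (M.submatrix e.symm e.symm).submatrix e e * Λ.submatrix e id := by
        simp [transpose_submatrix]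
    _ = Λᵀ * M.submatrix e.symm e.symm * Λ := by
        rw [submatrix_mul_equiv, submatrix_mul_equiv, submatrix_id_id]

end Matrix

namespace IsLinearization

variable {F : Type} [Field F] {m : ℕ} {ι ι' ρ : Type*} [Fintype ι] [DecidableEq ι]
  [Fintype ι'] [DecidableEq ι'] [Fintype ρ] [DecidableEq ρ]
  {L : Matrix ι ι F[X]} {P : Matrix ρ ρ F[X]}

theorem fromBlocks_one : IsLinearization m (fromBlocks (1 : Matrix (Fin m) (Fin m) F[X]) 0 0 P) P :=
  ⟨Equiv.refl _, 1, 1, by simp, by simp, by simp⟩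

theorem unimodular_mul (h : IsLinearization m L P) {U V : Matrix ι ι F[X]}
    (hU : IsUnit U.det) (hV : IsUnit V.det) : IsLinearization m (U * L * V) P := by
  obtain ⟨e, U₀, V₀, hU₀, hV₀, hL⟩ := h
  refine ⟨e, U₀ * U⁻¹, V⁻¹ * V₀, ?_, ?_, ?_⟩
  · rw [det_mul]
    exact hU₀.mul (isUnit_nonsing_inv_det U hU)
  · rw [det_mul]
    exact (isUnit_nonsing_inv_det V hV).mul hV₀
  · rw [← hL]
    simp only [Matrix.mul_assoc, nonsing_inv_mul_cancel_left _ _ hU,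
      mul_nonsing_inv_cancel_left _ _ hV]

theorem of_unimodular_mul {U V : Matrix ι ι F[X]} (h : IsLinearization m (U * L * V) P)
    (hU : IsUnit U.det) (hV : IsUnit V.det) : IsLinearization m L P := by
  simpa only [Matrix.mul_assoc, nonsing_inv_mul_cancel_left _ _ hU,
    mul_nonsing_inv_cancel_right _ _ hV] using
    h.unimodular_mul (isUnit_nonsing_inv_det U hU) (isUnit_nonsing_inv_det V hV)

theorem submatrix (h : IsLinearization m L P) (f g : ι' ≃ ι) :
    IsLinearization m (L.submatrix f g) P := by
  obtain ⟨e, U, V, hU, hV, hL⟩ := h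
  have hVgf : V.submatrix g f = (V.submatrix f f).submatrix (g.trans f.symm) id := by
    ext; simp
  refine ⟨e.trans f.symm, U.submatrix f f, V.submatrix g f, ?_, ?_, ?_⟩
  · rwa [det_submatrix_equiv_self]
  · rw [hVgf, det_permute, det_submatrix_equiv_self]
    exact ((Units.isUnit _).map (Int.castRingHom F[X])).mul hV
  · rw [submatrix_mul_equiv, submatrix_mul_equiv, hL]
    rfl

theorem of_submatrix (f : ι' ≃ ι) (h : IsLinearization m (L.submatrix f f) P) :
    IsLinearization m L P := by
  simpa using h.submatrix f.symm f.symm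

end IsLinearization

section BlockElimination

variable {F : Type} [Field F] {α β : Type*} [Fintype α] [DecidableEq α] [Fintype β]
  [DecidableEq β]

theorem isLinearization_fromBlocks_fromCols_one (N : Matrix (β ⊕ α) (β ⊕ α) F[X]) {σ : F}
    (hσ : σ ≠ 0) {m : ℕ} (hm : Fintype.card β + Fintype.card β = m) :
    IsLinearization m
      (fromBlocks N (fromCols (1 : Matrix β β F[X]) 0)ᵀ
        (σ • fromCols (1 : Matrix β β F[X]) 0) 0)
      N.toBlocks₂₂ := by
  have hU : IsUnit (fromBlocks 1 (-(σ⁻¹ • N.toCols₁)) 0 (σ⁻¹ • 1) :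
      Matrix ((β ⊕ α) ⊕ β) ((β ⊕ α) ⊕ β) F[X]).det := by
    rw [det_fromBlocks_zero₂₁, det_one, one_mul,
      ← algebraMap_smul F[X] σ⁻¹ (1 : Matrix β β F[X]), det_smul, det_one, mul_one]
    exact ((inv_ne_zero hσ).isUnit.map (algebraMap F F[X])).pow _
  have hV : IsUnit (fromBlocks 1 0 (-fromCols 0 N.toBlocks₁₂) 1 :
      Matrix ((β ⊕ α) ⊕ β) ((β ⊕ α) ⊕ β) F[X]).det := by
    simp
  -- The eliminated pencil is `[[0, 0, I], [0, P, 0], [I, 0, 0]]`: rows and columns are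
  -- matched with `diag(I, P)` by two different bijections, swapping the two copies of `β`.
  let e : β ⊕ β ≃ Fin m := Fintype.equivFinOfCardEq (by simp [hm])
  let shuffle (e' : β ⊕ β ≃ Fin m) : (β ⊕ α) ⊕ β ≃ Fin m ⊕ α :=
    (Equiv.sumAssoc β α β).trans <| (Equiv.sumCongr (Equiv.refl β) (Equiv.sumComm α β)).trans <|
      (Equiv.sumAssoc β β α).symm.trans (Equiv.sumCongr e' (Equiv.refl α))
  refine IsLinearization.of_unimodular_mul ?_ hU hV
  convert IsLinearization.fromBlocks_one.submatrix (shuffle e)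
    (shuffle ((Equiv.sumComm β β).trans e)) using 1
  ext ((b | a) | b) ((c | d) | c) : 1 <;>
    simp [eq_comm, fromBlocks_multiply, mul_apply, one_apply, hσ, toBlocks₁₂, toCols₁,
      toBlocks₂₂, shuffle]

theorem isLinearization_fromBlocks_fromCols (N : Matrix (β ⊕ α) (β ⊕ α) F[X])
    {T : Matrix β β F[X]} (hT : IsUnit T.det) {σ : F} (hσ : σ ≠ 0) {m : ℕ}
    (hm : Fintype.card β + Fintype.card β = m) :
    IsLinearization m (fromBlocks N (fromCols T 0)ᵀ (σ • fromCols T 0) 0) N.toBlocks₂₂ := by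
  convert (isLinearization_fromBlocks_fromCols_one N hσ hm).unimodular_mul
    (U := fromBlocks 1 0 0 T) (V := fromBlocks 1 0 0 Tᵀ)
    (by simpa [det_fromBlocks_zero₂₁]) (by simpa [det_fromBlocks_zero₂₁]) using 1
  simp [fromBlocks_multiply, transpose_fromCols, mul_fromCols, fromRows_mul]

variable {ι : Type*} [Fintype ι] [DecidableEq ι]

theorem isLinearization_of_mul_submatrix_eq_fromCols (N : Matrix ι ι F[X])
    (K : Matrix β ι F[X]) {Q : Matrix ι ι F[X]} (hQ : IsUnit Q.det) (g : β ⊕ α ≃ ι)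
    {T : Matrix β β F[X]} (hT : IsUnit T.det) (hKQ : (K * Q).submatrix id g = fromCols T 0)
    {σ : F} (hσ : σ ≠ 0) {m : ℕ} (hm : Fintype.card β + Fintype.card β = m) :
    IsLinearization m (fromBlocks N Kᵀ (σ • K) 0)
      ((Q.submatrix id g).toCols₂ᵀ * N * (Q.submatrix id g).toCols₂) := by
  have hconj :
      (fromBlocks Qᵀ 0 0 1 * fromBlocks N Kᵀ (σ • K) 0 * fromBlocks Q 0 0 1).submatrix
        (Equiv.sumCongr g (Equiv.refl β)) (Equiv.sumCongr g (Equiv.refl β)) =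
      fromBlocks ((Q.submatrix id g)ᵀ * N * Q.submatrix id g) (fromCols T 0)ᵀ
        (σ • fromCols T 0) 0 := by
    rw [← hKQ]
    ext (i | i) (j | j) : 1 <;> simp [fromBlocks_multiply, mul_apply]
  refine IsLinearization.of_unimodular_mul (U := fromBlocks Qᵀ 0 0 1)
    (V := fromBlocks Q 0 0 1) ?_ (by simpa [det_fromBlocks_zero₂₁])
    (by simpa [det_fromBlocks_zero₂₁])
  refine IsLinearization.of_submatrix (Equiv.sumCongr g (Equiv.refl β)) ?_
  rw [hconj]
  exact isLinearization_fromBlocks_fromCols _ hT hσ hm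

end BlockElimination

section KroneckerPencil

variable {F : Type} [Field F] {s n : ℕ}

variable (F s) in
noncomputable def lamCompletion : Matrix (Fin (s+1)) (Fin (s+1)) F[X] :=
  Matrix.of fun i j => if j = Fin.last s then X ^ (s - (i : ℕ)) else if i = j then 1 else 0

theorem det_lamCompletion : (lamCompletion F s).det = 1 := by
  rw [det_of_isUpperTriangular]
  · refine Finset.prod_eq_one fun i _ => ?_
    by_cases hi : i = Fin.last s <;> simp [lamCompletion, hi]
  · intro i j hji
    have hj : j ≠ Fin.last s := (hji.trans_le (Fin.le_last i)).ne
    simp [lamCompletion, hj, (show j < i from hji).ne']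

theorem Lpen_mul_lamCompletion_last (i : Fin s) :
    (Lpen F s * lamCompletion F s) i (Fin.last s) = 0 := by
  rw [mul_apply, Fintype.sum_eq_add i.castSucc i.succ Fin.castSucc_lt_succ.ne]
  · simp only [Lpen, lamCompletion, of_apply, Fin.val_castSucc, Fin.val_succ,
      if_neg (Nat.succ_ne_self _), ↓reduceIte]
    rw [← pow_succ', show s - (i + 1) + 1 = s - i by omega]
    ring
  · rintro k ⟨hk₁, hk₂⟩
    simp only [Lpen, lamCompletion, of_apply, if_true]
    rw [if_neg (show (k : ℕ) ≠ i from fun h => hk₁ (Fin.ext h)),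
      if_neg (show (k : ℕ) ≠ i + 1 from fun h => hk₂ (Fin.ext h)), zero_mul]

theorem Lpen_mul_lamCompletion_castSucc (i j : Fin s) :
    (Lpen F s * lamCompletion F s) i j.castSucc = Lpen F s i j.castSucc := by
  simp [mul_apply, lamCompletion, Fin.castSucc_ne_last]

theorem det_Lpen_submatrix_castSucc :
    ((Lpen F s).submatrix id Fin.castSucc).det = (-1) ^ s := by
  rw [det_of_isUpperTriangular]
  · simp [Lpen]
  · intro i j hji
    have : (j : ℕ) < i := hji
    simp only [submatrix_apply, id, Lpen, of_apply, Fin.val_castSucc]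
    rw [if_neg (by omega), if_neg (by omega)]

variable (s n) in
def blockSplitEquiv : (Fin s × Fin n) ⊕ Fin n ≃ Fin (s+1) × Fin n :=
  (Equiv.sumCongr (Equiv.refl _) (Equiv.uniqueProd (Fin n) (Fin 1)).symm).trans <|
    (Equiv.sumProdDistrib (Fin s) (Fin 1) (Fin n)).symm.trans
      (Equiv.prodCongr finSumFinEquiv (Equiv.refl _))

@[simp] theorem blockSplitEquiv_inl (p : Fin s × Fin n) :
    blockSplitEquiv s n (Sum.inl p) = (p.1.castSucc, p.2) := rfl

@[simp] theorem blockSplitEquiv_inr (r : Fin n) :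
    blockSplitEquiv s n (Sum.inr r) = (Fin.last s, r) := rfl

theorem Lpen_kronecker_mul_lamCompletion_kronecker :
    ((Lpen F s ⊗ₖ (1 : Matrix (Fin n) (Fin n) F[X])) *
      (lamCompletion F s ⊗ₖ (1 : Matrix (Fin n) (Fin n) F[X]))).submatrix id
        (blockSplitEquiv s n) = fromCols ((Lpen F s).submatrix id Fin.castSucc ⊗ₖ 1) 0 := by
  rw [← mul_kronecker_mul, one_mul]
  ext ⟨i, r⟩ (⟨j, c⟩ | c) : 1 <;>
    simp [Lpen_mul_lamCompletion_castSucc, Lpen_mul_lamCompletion_last]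

theorem toCols₂_lamCompletion_kronecker :
    ((lamCompletion F s ⊗ₖ (1 : Matrix (Fin n) (Fin n) F[X])).submatrix id
      (blockSplitEquiv s n)).toCols₂ = Lam F s n := by
  ext ⟨k, r⟩ c
  simp [lamCompletion, Lam, one_apply]

theorem blockKron_isLinearization {σ : F} (hσ : σ ≠ 0)
    (M : Matrix (Fin (s+1) × Fin n) (Fin (s+1) × Fin n) F[X]) :
    IsLinearization (2*s*n) (blockKron F s n σ M) ((Lam F s n)ᵀ * M * Lam F s n) := by
  rw [← toCols₂_lamCompletion_kronecker]
  refine isLinearization_of_mul_submatrix_eq_fromCols M _ ?_ _ ?_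
    Lpen_kronecker_mul_lamCompletion_kronecker hσ (by simp; ring)
  · simp [det_kronecker, det_lamCompletion]
  · simpa [det_kronecker, det_Lpen_submatrix_castSucc] using (isUnit_neg_one.pow s).pow n

end KroneckerPencil

section Reversal

variable {F : Type} [Field F] {l m o : Type*}

theorem revMat_mul [Fintype m] {P : Matrix l m F[X]} {Q : Matrix m o F[X]} {a b : ℕ}
    (hP : ∀ i j, (P i j).natDegree ≤ a) (hQ : ∀ i j, (Q i j).natDegree ≤ b) :
    revMat (a + b) (P * Q) = revMat a P * revMat b Q := by
  ext i j
  simp only [revMat, map_apply, mul_apply, reflect_sum, reflect_mul _ _ (hP i _) (hQ _ j)]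

theorem revMat_transpose (g : ℕ) (M : Matrix l m F[X]) : revMat g Mᵀ = (revMat g M)ᵀ := rfl

theorem pencil_apply (A B : Matrix l m F) (i : l) (j : m) :
    pencil A B i j = C (A i j) + X * C (B i j) := rfl

theorem revMat_pencil (A B : Matrix l m F) : revMat 1 (pencil A B) = pencil B A := by
  ext i j : 1
  rw [revMat, map_apply, pencil_apply, pencil_apply,
    show C (A i j) + X * C (B i j) = C (A i j) * X ^ 0 + C (B i j) * X ^ 1 by ring,
    reflect_add, reflect_C_mul_X_pow, reflect_C_mul_X_pow, revAt_le zero_le_one,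
    revAt_le le_rfl]
  ring

theorem natDegree_pencil_apply_le (A B : Matrix l m F) (i : l) (j : m) :
    (pencil A B i j).natDegree ≤ 1 := by
  rw [pencil_apply]
  compute_degree

variable {k s n : ℕ}

theorem natDegree_Lam_apply_le (p : Fin (s+1) × Fin n) (c : Fin n) :
    (Lam F s n p c).natDegree ≤ s := by
  simp only [Lam, of_apply]
  split_ifs
  · exact (natDegree_X_pow_le _).trans (Nat.sub_le _ _)
  · simp

variable (k n) in
def blockRevPerm : Equiv.Perm (Fin k × Fin n) := Fin.revPerm.prodCongr (Equiv.refl (Fin n))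

@[simp] theorem blockRevPerm_apply (p : Fin k × Fin n) :
    blockRevPerm k n p = (p.1.rev, p.2) := rfl

@[simp] theorem blockRevPerm_symm : (blockRevPerm k n).symm = blockRevPerm k n := rfl

theorem revMat_Lam : revMat s (Lam F s n) = (Lam F s n).submatrix (blockRevPerm (s+1) n) id := by
  ext ⟨k, r⟩ c : 1
  by_cases h : r = c
  · simp only [revMat, Lam, map_apply, of_apply, submatrix_apply, blockRevPerm_apply,
      Fin.val_rev, id, if_pos h]
    rw [reflect_monomial, revAt_le (Nat.sub_le _ _)]
    congr 1
    omega
  · simp [revMat, Lam, h]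

theorem revMat_Lam_transpose_mul_pencil_mul_Lam
    (A B : Matrix (Fin (s+1) × Fin n) (Fin (s+1) × Fin n) F) :
    revMat (2*s+1) ((Lam F s n)ᵀ * pencil A B * Lam F s n) =
      (Lam F s n)ᵀ * (pencil B A).submatrix (blockRevPerm (s+1) n) (blockRevPerm (s+1) n) *
        Lam F s n := by
  have hΛ : ∀ i j, ((Lam F s n)ᵀ i j).natDegree ≤ s := fun i j => natDegree_Lam_apply_le j i
  have hPΛ := natDegree_mul_apply_le hΛ (natDegree_pencil_apply_le A B)
  rw [show 2*s+1 = s + 1 + s by ring, revMat_mul hPΛ natDegree_Lam_apply_le,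
    revMat_mul hΛ (natDegree_pencil_apply_le A B), revMat_transpose, revMat_pencil, revMat_Lam]
  exact transpose_submatrix_mul_mul_submatrix _ _ (blockRevPerm (s+1) n)

theorem reflect_Lpen_rev (i : Fin s) (j : Fin (s+1)) :
    reflect 1 (Lpen F s i.rev j.rev) = -Lpen F s i j := by
  have hi := i.isLt
  have hj := j.isLt
  simp only [Lpen, of_apply, Fin.val_rev]
  split_ifs <;> first | omega | simp [reflect_neg, reflect_one]

theorem revMat_blockKron_submatrix (σ : F)
    (A B : Matrix (Fin (s+1) × Fin n) (Fin (s+1) × Fin n) F) :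
    (revMat 1 (blockKron F s n σ (pencil A B))).submatrix
        (Equiv.sumCongr (blockRevPerm (s+1) n) (blockRevPerm s n))
        (Equiv.sumCongr (blockRevPerm (s+1) n) (blockRevPerm s n)) =
      fromBlocks 1 0 0 (-1) *
        blockKron F s n σ
          ((pencil B A).submatrix (blockRevPerm (s+1) n) (blockRevPerm (s+1) n)) *
        fromBlocks 1 0 0 (-1) := by
  rw [← revMat_pencil A B]
  ext (⟨i, r⟩ | ⟨i, r⟩) (⟨j, c⟩ | ⟨j, c⟩) : 1 <;>
    by_cases h : r = c <;>
    simp [blockKron, fromBlocks_multiply, revMat, one_apply, h, Ne.symm, smul_eq_C_mul,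
      reflect_C_mul, reflect_Lpen_rev]

end Reversal

theorem stmt_2_general {F : Type} [Field F] (n s : ℕ)
    (σ : F) (hσ : σ = 1 ∨ σ = -1)
    (A B : Matrix (Fin (s+1) × Fin n) (Fin (s+1) × Fin n) F) :
    IsLinearization (2*s*n) (blockKron F s n σ (pencil A B))
        ((Lam F s n)ᵀ * pencil A B * Lam F s n) ∧
      IsLinearization (2*s*n) (revMat 1 (blockKron F s n σ (pencil A B)))
        (revMat (2*s+1) ((Lam F s n)ᵀ * pencil A B * Lam F s n)) := by
  have hσ₀ : σ ≠ 0 := by rcases hσ with rfl | rfl <;> norm_num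
  have hS : IsUnit (fromBlocks 1 0 0 (-1) :
      Matrix ((Fin (s+1) × Fin n) ⊕ (Fin s × Fin n)) _ F[X]).det := by
    simpa [det_fromBlocks_zero₂₁, det_neg] using isUnit_neg_one.pow _
  refine ⟨blockKron_isLinearization hσ₀ _, ?_⟩
  rw [revMat_Lam_transpose_mul_pencil_mul_Lam]
  refine IsLinearization.of_submatrix
    (Equiv.sumCongr (blockRevPerm (s+1) n) (blockRevPerm s n)) ?_
  rw [revMat_blockKron_submatrix]
  exact (blockKron_isLinearization hσ₀ _).unimodular_mul hS hS

/-- Every block Kronecker pencil is a strong linearization of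
`P(λ) = (Λ_s(λ)ᵀ⊗I_n)(λB+A)(Λ_s(λ)⊗I_n)` regarded as a polynomial of grade `2s+1`. -/
theorem stmt_2 {F : Type} [Field F] (n s : ℕ) (hn : 0 < n) (hs : 0 < s)
    (σ : F) (hσ : σ = 1 ∨ σ = -1)
    (A B : Matrix (Fin (s+1) × Fin n) (Fin (s+1) × Fin n) F) :
    IsLinearization (2*s*n) (blockKron F s n σ (pencil A B))
        ((Lam F s n)ᵀ * pencil A B * Lam F s n) ∧
      IsLinearization (2*s*n) (revMat 1 (blockKron F s n σ (pencil A B)))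
        (revMat (2*s+1) ((Lam F s n)ᵀ * pencil A B * Lam F s n)) :=
  stmt_2_general n s σ hσ A B
end

section
/- Let P(λ) = ∑_{k=0}^d λ^k P_k be a skew-symmetric n×n matrix polynomial (P_k^T = −P_k for all k) of odd degree d over a field F, and set s = (d−1)/2. Let A, B ∈ F^{(s+1)n×(s+1)n} be partitioned into (s+1)×(s+1) blocks A_{ij}, B_{ij} ∈ F^{n×n}. Then A and B are skew-symmetric and satisfy the block conditions ∑_{i+j=d+2−k} B_{ij} + ∑_{i+j=d+1−k} A_{ij} = P_k for k = 0,…,d if and only if A_{ji} = −A_{ij}^T and B_{ji} = −B_{ij}^T for all i < j and, for every k = 1,…,s+1, B_{kk} = P_{d−2k+2} − ∑_{i+j=2k, i<j}(B_{ij}−B_{ij}^T) − ∑_{i+j=2k−1, i<j}(A_{ij}−A_{ij}^T) and A_{kk} = P_{d−2k+1} − ∑_{i+j=2k+1, i<j}(B_{ij}−B_{ij}^T) − ∑_{i+j=2k, i<j}(A_{ij}−A_{ij}^T). In particular, for every choice of the off-diagonal blocks A_{ij}, B_{ij} (i < j), these formulas produce skew-symmetric matrices A, B satisfying the block conditions.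 -/
open Polynomial Matrix
open scoped Kronecker

section AuxStmt5
open Finset Matrix


private lemma sum_split' {α : Type*} [AddCommMonoid α] {s : ℕ} (Q : ℕ → Prop) [DecidablePred Q]
    (f : Fin (s+1) × Fin (s+1) → α) :
    ∑ p ∈ univ.filter (fun p : Fin (s+1) × Fin (s+1) => Q ((p.1:ℕ)+(p.2:ℕ))), f p
      = (∑ p ∈ univ.filter (fun p : Fin (s+1) × Fin (s+1) => Q ((p.1:ℕ)+(p.2:ℕ)) ∧ p.1 < p.2),
          (f p + f p.swap))
        + ∑ p ∈ univ.filter (fun p : Fin (s+1) × Fin (s+1) => Q ((p.1:ℕ)+(p.2:ℕ)) ∧ p.1 = p.2),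
          f p := by
  classical
  rw [Finset.sum_add_distrib]
  have hswap : (∑ p ∈ univ.filter (fun p : Fin (s+1) × Fin (s+1) => Q ((p.1:ℕ)+(p.2:ℕ)) ∧ p.1 < p.2),
        f p.swap)
      = ∑ p ∈ univ.filter (fun p : Fin (s+1) × Fin (s+1) => Q ((p.1:ℕ)+(p.2:ℕ)) ∧ p.2 < p.1),
        f p := by
    apply Finset.sum_nbij' (fun p => p.swap) (fun p => p.swap) <;> simp [Nat.add_comm]
  rw [hswap]
  have h1 := Finset.sum_filter_add_sum_filter_not
    (univ.filter (fun p : Fin (s+1) × Fin (s+1) => Q ((p.1:ℕ)+(p.2:ℕ)))) (fun p => p.1 < p.2) f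
  have h2 := Finset.sum_filter_add_sum_filter_not
    ((univ.filter (fun p : Fin (s+1) × Fin (s+1) => Q ((p.1:ℕ)+(p.2:ℕ)))).filter
      (fun p => ¬ p.1 < p.2)) (fun p => p.2 < p.1) f
  simp only [Finset.filter_filter] at h1 h2
  have e1 : (univ.filter (fun p : Fin (s+1) × Fin (s+1) =>
      (Q ((p.1:ℕ)+(p.2:ℕ)) ∧ ¬ p.1 < p.2) ∧ p.2 < p.1))
      = univ.filter (fun p : Fin (s+1) × Fin (s+1) => Q ((p.1:ℕ)+(p.2:ℕ)) ∧ p.2 < p.1) := by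
    ext p; simp only [mem_filter, mem_univ, true_and, Fin.lt_def]
    constructor
    · rintro ⟨⟨h, _⟩, h2⟩; exact ⟨h, h2⟩
    · rintro ⟨h, h2⟩; exact ⟨⟨h, by omega⟩, h2⟩
  have e2 : (univ.filter (fun p : Fin (s+1) × Fin (s+1) =>
      (Q ((p.1:ℕ)+(p.2:ℕ)) ∧ ¬ p.1 < p.2) ∧ ¬ p.2 < p.1))
      = univ.filter (fun p : Fin (s+1) × Fin (s+1) => Q ((p.1:ℕ)+(p.2:ℕ)) ∧ p.1 = p.2) := by
    ext p; simp only [mem_filter, mem_univ, true_and, Fin.lt_def, Fin.ext_iff]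
    constructor
    · rintro ⟨⟨h, h1⟩, h2⟩; exact ⟨h, by omega⟩
    · rintro ⟨h, h2⟩; exact ⟨⟨h, by omega⟩, by omega⟩
  rw [e1, e2] at h2
  rw [← h1, ← h2]
  abel

private lemma diag_even {α : Type*} [AddCommMonoid α] {s : ℕ} (Q : ℕ → Prop) [DecidablePred Q]
    (κ : Fin (s+1)) (h : ∀ i : Fin (s+1), Q ((i:ℕ)+(i:ℕ)) ↔ i = κ)
    (f : Fin (s+1) × Fin (s+1) → α) :
    ∑ p ∈ univ.filter (fun p : Fin (s+1) × Fin (s+1) => Q ((p.1:ℕ)+(p.2:ℕ)) ∧ p.1 = p.2), f p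
      = f (κ, κ) := by
  have : (univ.filter (fun p : Fin (s+1) × Fin (s+1) => Q ((p.1:ℕ)+(p.2:ℕ)) ∧ p.1 = p.2))
      = {(κ, κ)} := by
    ext ⟨a, b⟩
    simp only [mem_filter, mem_univ, true_and, Finset.mem_singleton, Prod.mk.injEq]
    constructor
    · rintro ⟨hq, rfl⟩
      have := (h a).1 hq
      exact ⟨this, this⟩
    · rintro ⟨h1, h2⟩
      subst h1; subst h2
      exact ⟨(h _).2 rfl, rfl⟩
  rw [this, Finset.sum_singleton]

private lemma diag_empty {α : Type*} [AddCommMonoid α] {s : ℕ} (Q : ℕ → Prop) [DecidablePred Q]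
    (h : ∀ i : Fin (s+1), ¬ Q ((i:ℕ)+(i:ℕ)))
    (f : Fin (s+1) × Fin (s+1) → α) :
    ∑ p ∈ univ.filter (fun p : Fin (s+1) × Fin (s+1) => Q ((p.1:ℕ)+(p.2:ℕ)) ∧ p.1 = p.2), f p
      = 0 := by
  have : (univ.filter (fun p : Fin (s+1) × Fin (s+1) => Q ((p.1:ℕ)+(p.2:ℕ)) ∧ p.1 = p.2))
      = ∅ := by
    ext ⟨a, b⟩
    simp only [mem_filter, mem_univ, true_and, Finset.notMem_empty, iff_false, not_and]
    intro hq hab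
    subst hab
    exact absurd hq (h a)
  rw [this, Finset.sum_empty]

private lemma skew_iff_blk {F : Type} [Field F] {n s : ℕ}
    (A : Matrix (Fin (s+1) × Fin n) (Fin (s+1) × Fin n) F) :
    Aᵀ = -A ↔ ∀ i j : Fin (s+1), blk A j i = -(blk A i j)ᵀ := by
  constructor
  · intro h i j
    ext r c
    have := congrFun (congrFun h (i, c)) (j, r)
    simpa [blk] using this
  · intro h
    ext ⟨i, r⟩ ⟨j, c⟩
    have := congrFun (congrFun (h i j) c) r
    simpa [blk] using this

private lemma sum_skew {F : Type} [Field F] {n s : ℕ}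
    (M : Matrix (Fin (s+1) × Fin n) (Fin (s+1) × Fin n) F)
    (S : Finset (Fin (s+1) × Fin (s+1))) :
    (∑ p ∈ S, (blk M p.1 p.2 - (blk M p.1 p.2)ᵀ))ᵀ
      = -∑ p ∈ S, (blk M p.1 p.2 - (blk M p.1 p.2)ᵀ) := by
  rw [Matrix.transpose_sum, ← Finset.sum_neg_distrib]
  exact Finset.sum_congr rfl fun p _ => by
    rw [Matrix.transpose_sub, Matrix.transpose_transpose, neg_sub]

private lemma coreB {F : Type} [Field F] {n s : ℕ} (Pc : ℕ → Matrix (Fin n) (Fin n) F)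
    (A B : Matrix (Fin (s+1) × Fin n) (Fin (s+1) × Fin n) F)
    (hA : ∀ i j : Fin (s+1), i < j → blk A j i = -(blk A i j)ᵀ)
    (hB : ∀ i j : Fin (s+1), i < j → blk B j i = -(blk B i j)ᵀ)
    (κ : Fin (s+1)) (k : ℕ) (hk : k + 2*(κ:ℕ) = 2*s+1) :
    ((∑ p ∈ Finset.univ.filter
        (fun p : Fin (s+1) × Fin (s+1) => (p.1 : ℕ) + (p.2 : ℕ) + 2 + k = 2*s+1 + 2),
        blk B p.1 p.2) +
      (∑ p ∈ Finset.univ.filter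
        (fun p : Fin (s+1) × Fin (s+1) => (p.1 : ℕ) + (p.2 : ℕ) + 2 + k = 2*s+1 + 1),
        blk A p.1 p.2) = Pc k)
    ↔ blk B κ κ =
        Pc (2*s+1 - 2*(κ : ℕ)) -
          (∑ p ∈ Finset.univ.filter (fun p : Fin (s+1) × Fin (s+1) =>
              (p.1 : ℕ) + (p.2 : ℕ) = 2*(κ : ℕ) ∧ p.1 < p.2),
            (blk B p.1 p.2 - (blk B p.1 p.2)ᵀ)) -
          (∑ p ∈ Finset.univ.filter (fun p : Fin (s+1) × Fin (s+1) =>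
              (p.1 : ℕ) + (p.2 : ℕ) + 1 = 2*(κ : ℕ) ∧ p.1 < p.2),
            (blk A p.1 p.2 - (blk A p.1 p.2)ᵀ)) := by
  have hPc : Pc (2*s+1 - 2*(κ:ℕ)) = Pc k := congrArg Pc (by omega)
  have eB : (Finset.univ.filter
      (fun p : Fin (s+1) × Fin (s+1) => (p.1 : ℕ) + (p.2 : ℕ) + 2 + k = 2*s+1 + 2))
      = Finset.univ.filter (fun p : Fin (s+1) × Fin (s+1) => (p.1:ℕ)+(p.2:ℕ) = 2*(κ:ℕ)) := by
    ext p; simp only [mem_filter, mem_univ, true_and]; omega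
  have eA : (Finset.univ.filter
      (fun p : Fin (s+1) × Fin (s+1) => (p.1 : ℕ) + (p.2 : ℕ) + 2 + k = 2*s+1 + 1))
      = Finset.univ.filter
          (fun p : Fin (s+1) × Fin (s+1) => (p.1:ℕ)+(p.2:ℕ) + 1 = 2*(κ:ℕ)) := by
    ext p; simp only [mem_filter, mem_univ, true_and]; omega
  have hBsplit :
      (∑ p ∈ Finset.univ.filter
          (fun p : Fin (s+1) × Fin (s+1) => (p.1:ℕ)+(p.2:ℕ) = 2*(κ:ℕ)), blk B p.1 p.2)
      = (∑ p ∈ Finset.univ.filter (fun p : Fin (s+1) × Fin (s+1) =>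
            (p.1:ℕ)+(p.2:ℕ) = 2*(κ:ℕ) ∧ p.1 < p.2), (blk B p.1 p.2 - (blk B p.1 p.2)ᵀ))
        + blk B κ κ := by
    refine (sum_split' (fun m => m = 2*(κ:ℕ)) (fun p => blk B p.1 p.2)).trans ?_
    congr 1
    · refine Finset.sum_congr rfl fun p hp => ?_
      simp only [mem_filter, mem_univ, true_and] at hp
      show blk B p.1 p.2 + blk B p.2 p.1 = _
      rw [hB p.1 p.2 hp.2, sub_eq_add_neg]
    · exact diag_even (fun m => m = 2*(κ:ℕ)) κ
        (fun i => ⟨fun h => Fin.ext (by omega), fun h => by subst h; ring⟩) _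
  have hAsplit :
      (∑ p ∈ Finset.univ.filter
          (fun p : Fin (s+1) × Fin (s+1) => (p.1:ℕ)+(p.2:ℕ) + 1 = 2*(κ:ℕ)), blk A p.1 p.2)
      = (∑ p ∈ Finset.univ.filter (fun p : Fin (s+1) × Fin (s+1) =>
            (p.1:ℕ)+(p.2:ℕ) + 1 = 2*(κ:ℕ) ∧ p.1 < p.2), (blk A p.1 p.2 - (blk A p.1 p.2)ᵀ))
        + 0 := by
    refine (sum_split' (fun m => m + 1 = 2*(κ:ℕ)) (fun p => blk A p.1 p.2)).trans ?_
    congr 1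
    · refine Finset.sum_congr rfl fun p hp => ?_
      simp only [mem_filter, mem_univ, true_and] at hp
      show blk A p.1 p.2 + blk A p.2 p.1 = _
      rw [hA p.1 p.2 hp.2, sub_eq_add_neg]
    · exact diag_empty (fun m => m + 1 = 2*(κ:ℕ)) (fun i => by omega) _
  rw [eB, eA, hBsplit, hAsplit, hPc]
  constructor
  · intro h; rw [← h]; abel
  · intro h; rw [h]; abel

private lemma coreA {F : Type} [Field F] {n s : ℕ} (Pc : ℕ → Matrix (Fin n) (Fin n) F)
    (A B : Matrix (Fin (s+1) × Fin n) (Fin (s+1) × Fin n) F)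
    (hA : ∀ i j : Fin (s+1), i < j → blk A j i = -(blk A i j)ᵀ)
    (hB : ∀ i j : Fin (s+1), i < j → blk B j i = -(blk B i j)ᵀ)
    (κ : Fin (s+1)) (k : ℕ) (hk : k + 2*(κ:ℕ) + 1 = 2*s+1) :
    ((∑ p ∈ Finset.univ.filter
        (fun p : Fin (s+1) × Fin (s+1) => (p.1 : ℕ) + (p.2 : ℕ) + 2 + k = 2*s+1 + 2),
        blk B p.1 p.2) +
      (∑ p ∈ Finset.univ.filter
        (fun p : Fin (s+1) × Fin (s+1) => (p.1 : ℕ) + (p.2 : ℕ) + 2 + k = 2*s+1 + 1),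
        blk A p.1 p.2) = Pc k)
    ↔ blk A κ κ =
        Pc (2*s+1 - 2*(κ : ℕ) - 1) -
          (∑ p ∈ Finset.univ.filter (fun p : Fin (s+1) × Fin (s+1) =>
              (p.1 : ℕ) + (p.2 : ℕ) = 2*(κ : ℕ) + 1 ∧ p.1 < p.2),
            (blk B p.1 p.2 - (blk B p.1 p.2)ᵀ)) -
          (∑ p ∈ Finset.univ.filter (fun p : Fin (s+1) × Fin (s+1) =>
              (p.1 : ℕ) + (p.2 : ℕ) = 2*(κ : ℕ) ∧ p.1 < p.2),
            (blk A p.1 p.2 - (blk A p.1 p.2)ᵀ)) := by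
  have hPc : Pc (2*s+1 - 2*(κ:ℕ) - 1) = Pc k := congrArg Pc (by omega)
  have eB : (Finset.univ.filter
      (fun p : Fin (s+1) × Fin (s+1) => (p.1 : ℕ) + (p.2 : ℕ) + 2 + k = 2*s+1 + 2))
      = Finset.univ.filter
          (fun p : Fin (s+1) × Fin (s+1) => (p.1:ℕ)+(p.2:ℕ) = 2*(κ:ℕ) + 1) := by
    ext p; simp only [mem_filter, mem_univ, true_and]; omega
  have eA : (Finset.univ.filter
      (fun p : Fin (s+1) × Fin (s+1) => (p.1 : ℕ) + (p.2 : ℕ) + 2 + k = 2*s+1 + 1))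
      = Finset.univ.filter (fun p : Fin (s+1) × Fin (s+1) => (p.1:ℕ)+(p.2:ℕ) = 2*(κ:ℕ)) := by
    ext p; simp only [mem_filter, mem_univ, true_and]; omega
  have hBsplit :
      (∑ p ∈ Finset.univ.filter
          (fun p : Fin (s+1) × Fin (s+1) => (p.1:ℕ)+(p.2:ℕ) = 2*(κ:ℕ) + 1), blk B p.1 p.2)
      = (∑ p ∈ Finset.univ.filter (fun p : Fin (s+1) × Fin (s+1) =>
            (p.1:ℕ)+(p.2:ℕ) = 2*(κ:ℕ) + 1 ∧ p.1 < p.2), (blk B p.1 p.2 - (blk B p.1 p.2)ᵀ))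
        + 0 := by
    refine (sum_split' (fun m => m = 2*(κ:ℕ) + 1) (fun p => blk B p.1 p.2)).trans ?_
    congr 1
    · refine Finset.sum_congr rfl fun p hp => ?_
      simp only [mem_filter, mem_univ, true_and] at hp
      show blk B p.1 p.2 + blk B p.2 p.1 = _
      rw [hB p.1 p.2 hp.2, sub_eq_add_neg]
    · exact diag_empty (fun m => m = 2*(κ:ℕ) + 1) (fun i => by omega) _
  have hAsplit :
      (∑ p ∈ Finset.univ.filter
          (fun p : Fin (s+1) × Fin (s+1) => (p.1:ℕ)+(p.2:ℕ) = 2*(κ:ℕ)), blk A p.1 p.2)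
      = (∑ p ∈ Finset.univ.filter (fun p : Fin (s+1) × Fin (s+1) =>
            (p.1:ℕ)+(p.2:ℕ) = 2*(κ:ℕ) ∧ p.1 < p.2), (blk A p.1 p.2 - (blk A p.1 p.2)ᵀ))
        + blk A κ κ := by
    refine (sum_split' (fun m => m = 2*(κ:ℕ)) (fun p => blk A p.1 p.2)).trans ?_
    congr 1
    · refine Finset.sum_congr rfl fun p hp => ?_
      simp only [mem_filter, mem_univ, true_and] at hp
      show blk A p.1 p.2 + blk A p.2 p.1 = _
      rw [hA p.1 p.2 hp.2, sub_eq_add_neg]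
    · exact diag_even (fun m => m = 2*(κ:ℕ)) κ
        (fun i => ⟨fun h => Fin.ext (by omega), fun h => by subst h; ring⟩) _
  rw [eB, eA, hBsplit, hAsplit, hPc]
  constructor
  · intro h; rw [← h]; abel
  · intro h; rw [h]; abel

end AuxStmt5

/-- For a skew-symmetric matrix polynomial `P` of odd degree `d = 2s+1`:
`A`, `B` are skew-symmetric and satisfy the block conditions iff the off-diagonal blocks
satisfy `A_{ji} = -A_{ij}ᵀ`, `B_{ji} = -B_{ij}ᵀ` and the diagonal blocks are given by the
explicit formulas of Theorem 4.11 (indices below are 0-based: `κ = k-1`). -/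
theorem stmt_5 {F : Type} [Field F] (n s : ℕ)
    (Pc : ℕ → Matrix (Fin n) (Fin n) F)
    (hskew : ∀ k, (Pc k)ᵀ = -Pc k) (hdeg : Pc (2*s+1) ≠ 0)
    (A B : Matrix (Fin (s+1) × Fin n) (Fin (s+1) × Fin n) F) :
    (Aᵀ = -A ∧ Bᵀ = -B ∧ blockConds (2*s+1) Pc A B) ↔
      ((∀ i j : Fin (s+1), i < j →
          blk A j i = -(blk A i j)ᵀ ∧ blk B j i = -(blk B i j)ᵀ) ∧
        ∀ κ : Fin (s+1),
          (blk B κ κ =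
            Pc (2*s+1 - 2*(κ : ℕ)) -
              (∑ p ∈ Finset.univ.filter (fun p : Fin (s+1) × Fin (s+1) =>
                  (p.1 : ℕ) + (p.2 : ℕ) = 2*(κ : ℕ) ∧ p.1 < p.2),
                (blk B p.1 p.2 - (blk B p.1 p.2)ᵀ)) -
              (∑ p ∈ Finset.univ.filter (fun p : Fin (s+1) × Fin (s+1) =>
                  (p.1 : ℕ) + (p.2 : ℕ) + 1 = 2*(κ : ℕ) ∧ p.1 < p.2),
                (blk A p.1 p.2 - (blk A p.1 p.2)ᵀ))) ∧
          (blk A κ κ =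
            Pc (2*s+1 - 2*(κ : ℕ) - 1) -
              (∑ p ∈ Finset.univ.filter (fun p : Fin (s+1) × Fin (s+1) =>
                  (p.1 : ℕ) + (p.2 : ℕ) = 2*(κ : ℕ) + 1 ∧ p.1 < p.2),
                (blk B p.1 p.2 - (blk B p.1 p.2)ᵀ)) -
              (∑ p ∈ Finset.univ.filter (fun p : Fin (s+1) × Fin (s+1) =>
                  (p.1 : ℕ) + (p.2 : ℕ) = 2*(κ : ℕ) ∧ p.1 < p.2),
                (blk A p.1 p.2 - (blk A p.1 p.2)ᵀ)))) := by
  constructor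
  · rintro ⟨hAs, hBs, hbc⟩
    have hAall := (skew_iff_blk A).1 hAs
    have hBall := (skew_iff_blk B).1 hBs
    have hA : ∀ i j : Fin (s+1), i < j → blk A j i = -(blk A i j)ᵀ := fun i j _ => hAall i j
    have hB : ∀ i j : Fin (s+1), i < j → blk B j i = -(blk B i j)ᵀ := fun i j _ => hBall i j
    refine ⟨fun i j _ => ⟨hAall i j, hBall i j⟩, fun κ => ⟨?_, ?_⟩⟩
    · have hκ := κ.2
      exact (coreB Pc A B hA hB κ (2*s+1-2*(κ:ℕ)) (by omega)).1
        (hbc (2*s+1-2*(κ:ℕ)) (by omega))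
    · have hκ := κ.2
      exact (coreA Pc A B hA hB κ (2*s-2*(κ:ℕ)) (by omega)).1
        (hbc (2*s-2*(κ:ℕ)) (by omega))
  · rintro ⟨hoff, hdiag⟩
    have hA : ∀ i j : Fin (s+1), i < j → blk A j i = -(blk A i j)ᵀ :=
      fun i j h => (hoff i j h).1
    have hB : ∀ i j : Fin (s+1), i < j → blk B j i = -(blk B i j)ᵀ :=
      fun i j h => (hoff i j h).2
    have hAd : ∀ κ : Fin (s+1), (blk A κ κ)ᵀ = -blk A κ κ := by
      intro κ
      rw [(hdiag κ).2, Matrix.transpose_sub, Matrix.transpose_sub, hskew, sum_skew, sum_skew]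
      abel
    have hBd : ∀ κ : Fin (s+1), (blk B κ κ)ᵀ = -blk B κ κ := by
      intro κ
      rw [(hdiag κ).1, Matrix.transpose_sub, Matrix.transpose_sub, hskew, sum_skew, sum_skew]
      abel
    have hAall : ∀ i j : Fin (s+1), blk A j i = -(blk A i j)ᵀ := by
      intro i j
      rcases lt_trichotomy i j with h | rfl | h
      · exact hA i j h
      · rw [hAd i, neg_neg]
      · rw [hA j i h, Matrix.transpose_neg, Matrix.transpose_transpose, neg_neg]
    have hBall : ∀ i j : Fin (s+1), blk B j i = -(blk B i j)ᵀ := by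
      intro i j
      rcases lt_trichotomy i j with h | rfl | h
      · exact hB i j h
      · rw [hBd i, neg_neg]
      · rw [hB j i h, Matrix.transpose_neg, Matrix.transpose_transpose, neg_neg]
    refine ⟨(skew_iff_blk A).2 hAall, (skew_iff_blk B).2 hBall, ?_⟩
    intro k hk
    rcases Nat.even_or_odd k with ⟨r, hr⟩ | ⟨r, hr⟩
    · exact (coreA Pc A B hA hB ⟨s - r, by omega⟩ k
        (by show k + 2*(s-r) + 1 = 2*s+1; omega)).2 ((hdiag ⟨s - r, by omega⟩).2)
    · exact (coreB Pc A B hA hB ⟨s - r, by omega⟩ k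
        (by show k + 2*(s-r) = 2*s+1; omega)).2 ((hdiag ⟨s - r, by omega⟩).1)
end

section
/- Let d be an even positive integer, set t = d/2, let Q(λ) be an n×n matrix polynomial of grade d−1 over a field F, and let P ∈ F^{n×n} be invertible. Then there exist unimodular 2n×2n matrix polynomials U(λ), V(λ) over F such that U(λ) · [[−P, λ^t P],[λ^t P, Q(λ)]] · V(λ) = diag(I_n, λ^d P + Q(λ)); in particular, the matrix polynomials λ^d P + Q(λ) and [[−P, λ^t P],[λ^t P, Q(λ)]] are extended unimodularly equivalent. -/
open Polynomial Matrix
open scoped Kronecker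

/-
Since `P` is invertible, block elimination clears the off-diagonal blocks: multiplying on the left
by `[[-P⁻¹, 0], [a I, I]]` and on the right by `[[I, a I], [0, I]]` turns `[[-P, a P], [a P, Q]]`
into `diag(I, a² P + Q)`; both factors are block triangular with invertible diagonal blocks.
Taking `a = λ^t` gives the Schur complement `λ^{2t} P + Q(λ)`.
-/

namespace Matrix

variable {R : Type*} [CommRing R] {m : Type*} [Fintype m] [DecidableEq m]

theorem fromBlocks_elim_mul_fromBlocks_neg_smul_mul {P P' : Matrix m m R} (h : P' * P = 1)
    (a : R) (Q : Matrix m m R) :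
    fromBlocks (-P') 0 (a • 1) 1 * fromBlocks (-P) (a • P) (a • P) Q * fromBlocks 1 (a • 1) 0 1 =
      fromBlocks 1 0 0 (a ^ 2 • P + Q) := by
  simp only [fromBlocks_multiply]
  simp [h, smul_smul, sq]

theorem exists_isUnit_det_mul_fromBlocks_neg_smul_mul_eq {P : Matrix m m R} (hP : IsUnit P.det)
    (a : R) (Q : Matrix m m R) :
    ∃ U V : Matrix (m ⊕ m) (m ⊕ m) R, IsUnit U.det ∧ IsUnit V.det ∧
      U * fromBlocks (-P) (a • P) (a • P) Q * V = fromBlocks 1 0 0 (a ^ 2 • P + Q) := by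
  refine ⟨fromBlocks (-P⁻¹) 0 (a • 1) 1, fromBlocks 1 (a • 1) 0 1, ?_, ?_,
    fromBlocks_elim_mul_fromBlocks_neg_smul_mul (nonsing_inv_mul P hP) a Q⟩
  · rw [det_fromBlocks_zero₁₂, det_one, mul_one, det_neg]
    exact (isUnit_one.neg.pow _).mul (isUnit_nonsing_inv_det P hP)
  · simp

end Matrix

theorem isUnit_det_matC {F : Type} [Field F] {m : Type*} [Fintype m] [DecidableEq m]
    {M : Matrix m m F}
    (hM : IsUnit M.det) : IsUnit (matC M).det := by
  rw [matC, ← RingHom.mapMatrix_apply, ← RingHom.map_det]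
  exact hM.map C

theorem stmt_8_general {F : Type} [Field F] (n t : ℕ)
    (Qm : Matrix (Fin n) (Fin n) (Polynomial F))
    (Pm : Matrix (Fin n) (Fin n) F) (hP : IsUnit Pm.det) :
    ∃ U V : Matrix (Fin n ⊕ Fin n) (Fin n ⊕ Fin n) (Polynomial F),
      IsUnit U.det ∧ IsUnit V.det ∧
        U * Matrix.fromBlocks (-(matC Pm)) ((X : Polynomial F) ^ t • matC Pm)
            ((X : Polynomial F) ^ t • matC Pm) Qm * V =
          Matrix.fromBlocks 1 0 0 ((X : Polynomial F) ^ (2*t) • matC Pm + Qm) := by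
  rw [mul_comm 2 t, pow_mul]
  exact exists_isUnit_det_mul_fromBlocks_neg_smul_mul_eq (isUnit_det_matC hP) _ Qm

/-- For even `d = 2t`, a grade-`(d-1)` matrix polynomial `Q` and an
invertible matrix `P`, the polynomials `λ^d P + Q(λ)` and `[[-P, λ^t P],[λ^t P, Q(λ)]]`
are extended unimodularly equivalent, via `2n × 2n` unimodular transformations. -/
theorem stmt_8 {F : Type} [Field F] (n t : ℕ) (ht : 0 < t)
    (Qm : Matrix (Fin n) (Fin n) (Polynomial F))
    (hQ : ∀ i j, (Qm i j).natDegree ≤ 2*t - 1)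
    (Pm : Matrix (Fin n) (Fin n) F) (hP : IsUnit Pm.det) :
    ∃ U V : Matrix (Fin n ⊕ Fin n) (Fin n ⊕ Fin n) (Polynomial F),
      IsUnit U.det ∧ IsUnit V.det ∧
        U * Matrix.fromBlocks (-(matC Pm)) ((X : Polynomial F) ^ t • matC Pm)
            ((X : Polynomial F) ^ t • matC Pm) Qm * V =
          Matrix.fromBlocks 1 0 0 ((X : Polynomial F) ^ (2*t) • matC Pm + Qm) :=
  stmt_8_general n t Qm Pm hP
end

section
/- Let d be an even positive integer, let Q(λ) be an n×n matrix polynomial of grade d−1 over a field F, and let P ∈ F^{n×n} be invertible. Then there exist unimodular 2n×2n matrix polynomials U(λ), V(λ) over F such that U(λ) · [[−λP, P],[P, rev_{d−1}Q(λ)]] · V(λ) = diag(I_n, P + λ·rev_{d−1}Q(λ)); in particular, rev_d(λ^d P + Q(λ)) = P + λ·rev_{d−1}Q(λ) and [[−λP, P],[P, rev_{d−1}Q(λ)]] are extended unimodularly equivalent. -/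
open Polynomial Matrix
open scoped Kronecker

section Aux
open Polynomial Matrix

private lemma reflect_eq_X_mul {F : Type} [Field F] (t : ℕ) (ht : 0 < t)
    (q : Polynomial F) (hq : q.natDegree ≤ 2*t - 1) :
    q.reflect (2*t) = X * q.reflect (2*t - 1) := by
  ext i
  rw [Polynomial.coeff_reflect]
  cases i with
  | zero =>
      rw [Polynomial.mul_coeff_zero, Polynomial.coeff_X_zero, zero_mul,
        Polynomial.revAt_le (Nat.zero_le _)]
      exact Polynomial.coeff_eq_zero_of_natDegree_lt (by omega)
  | succ m =>
      rw [Polynomial.coeff_X_mul, Polynomial.coeff_reflect]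
      by_cases h : m + 1 ≤ 2*t
      · rw [Polynomial.revAt_le h, Polynomial.revAt_le (by omega : m ≤ 2*t - 1)]
        congr 1; omega
      · rw [Polynomial.revAt_eq_self_of_lt (by omega), Polynomial.revAt_eq_self_of_lt (by omega)]
        rw [Polynomial.coeff_eq_zero_of_natDegree_lt (by omega),
          Polynomial.coeff_eq_zero_of_natDegree_lt (by omega)]

private lemma matC_mul {F : Type} [Field F] {n : ℕ} (A B : Matrix (Fin n) (Fin n) F) :
    matC (A * B) = matC A * matC B := by
  have : matC (A * B) = (A * B).map (Polynomial.C : F →+* Polynomial F) := rfl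
  rw [this, Matrix.map_mul]; rfl

private lemma matC_one {F : Type} [Field F] {n : ℕ} :
    matC (1 : Matrix (Fin n) (Fin n) F) = 1 := by
  have : matC (1 : Matrix (Fin n) (Fin n) F)
      = (1 : Matrix (Fin n) (Fin n) F).map (Polynomial.C : F →+* Polynomial F) := rfl
  rw [this, Matrix.map_one] <;> simp

end Aux

/-- For even `d = 2t`, a grade-`(d-1)` matrix polynomial `Q` and an
invertible matrix `P`, one has `rev_d(λ^d P + Q) = P + λ·rev_{d-1}Q`, and this polynomial
and `[[-λP, P],[P, rev_{d-1}Q(λ)]]` are extended unimodularly equivalent, via `2n × 2n`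
unimodular transformations. -/
theorem stmt_9 {F : Type} [Field F] (n t : ℕ) (ht : 0 < t)
    (Qm : Matrix (Fin n) (Fin n) (Polynomial F))
    (hQ : ∀ i j, (Qm i j).natDegree ≤ 2*t - 1)
    (Pm : Matrix (Fin n) (Fin n) F) (hP : IsUnit Pm.det) :
    revMat (2*t) ((X : Polynomial F) ^ (2*t) • matC Pm + Qm) =
        matC Pm + (X : Polynomial F) • revMat (2*t - 1) Qm ∧
      ∃ U V : Matrix (Fin n ⊕ Fin n) (Fin n ⊕ Fin n) (Polynomial F),
        IsUnit U.det ∧ IsUnit V.det ∧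
          U * Matrix.fromBlocks (-((X : Polynomial F) • matC Pm)) (matC Pm)
              (matC Pm) (revMat (2*t - 1) Qm) * V =
            Matrix.fromBlocks 1 0 0 (matC Pm + (X : Polynomial F) • revMat (2*t - 1) Qm) := by
  constructor
  · set R := revMat (2*t - 1) Qm with hR
    ext i j : 2
    have h1 : (revMat (2*t) ((X : Polynomial F) ^ (2*t) • matC Pm + Qm)) i j
        = Polynomial.reflect (2*t) (X ^ (2*t) * Polynomial.C (Pm i j) + Qm i j) := rfl
    have h2 : (matC Pm + (X : Polynomial F) • R) i j
        = Polynomial.C (Pm i j) + X * Polynomial.reflect (2*t - 1) (Qm i j) := rfl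
    rw [h1, h2, Polynomial.reflect_add, mul_comm ((X : Polynomial F) ^ (2*t)),
      Polynomial.reflect_C_mul_X_pow, Polynomial.revAt_le le_rfl, Nat.sub_self, pow_zero, mul_one,
      reflect_eq_X_mul t ht _ (hQ i j)]
  · set R := revMat (2*t - 1) Qm with hR
    set P := matC Pm with hP'
    set Pi := matC Pm⁻¹ with hPi
    have hinv : Pi * P = 1 := by
      rw [hPi, hP', ← matC_mul, Matrix.nonsing_inv_mul Pm hP, matC_one]
    refine ⟨Matrix.fromBlocks 0 Pi 1 ((X : Polynomial F) • 1),
      Matrix.fromBlocks 1 (-(Pi * R)) 0 1, ?_, ?_, ?_⟩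
    · apply Matrix.isUnit_det_of_right_inverse
        (B := Matrix.fromBlocks (-((X : Polynomial F) • P)) 1 P 0)
      rw [Matrix.fromBlocks_multiply]
      simp [hinv, Matrix.smul_mul]
    · apply Matrix.isUnit_det_of_right_inverse
        (B := Matrix.fromBlocks 1 (Pi * R) 0 1)
      rw [Matrix.fromBlocks_multiply]
      simp
    · rw [Matrix.fromBlocks_multiply, Matrix.fromBlocks_multiply]
      simp [hinv, Matrix.smul_mul, Matrix.mul_smul]
end

section
/- Let F be a field, let P_d ∈ F^{n×n}, let t ≥ 1, and let M_{12}(λ) be an n×tn matrix pencil over F, partitioned into n×n blocks M_{12}^{(1)}(λ), …, M_{12}^{(t)}(λ). Then M_{12}(λ)(Λ_{t−1}(λ)⊗I_n) = λ^t P_d if and only if there exist matrices W_0, W_1, …, W_t ∈ F^{n×n} with W_0 = −P_d and W_t = 0 such that M_{12}^{(j)}(λ) = −λ W_{j−1} + W_j for j = 1, …, t; equivalently, M_{12}(λ) = [λP_d + W_1 | −λW_1 + W_2 | ⋯ | −λW_{t−2} + W_{t−1} | −λW_{t−1}] for arbitrary W_1, …, W_{t−1} ∈ F^{n×n}. -/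
open Polynomial Matrix
open scoped Kronecker

/-! Write the blocks of `M₁₂` as `M₁₂^{(j)}(λ) = A_j + λ B_j`. Read as a polynomial with
matrix coefficients, `M₁₂(λ)(Λ_{t-1}(λ) ⊗ I_n) = ∑_j λ^{t-j} (A_j + λ B_j)`, and comparing
its coefficients of `λ^t, …, λ, 1` with those of `λ^t P_d` says exactly that the sequences
`(-P_d, A_1, …, A_t)` and `(-B_1, …, -B_t, 0)` coincide; their common value is
`(W_0, …, W_t)`. -/

theorem Fin.cons_eq_snoc_iff {α : Type*} {m : ℕ} (x y : α) (a b : Fin (m + 1) → α) :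
    (Fin.cons x a : Fin (m + 2) → α) = Fin.snoc b y ↔
      ∃ W : Fin (m + 2) → α, W 0 = x ∧ W (Fin.last (m + 1)) = y ∧
        ∀ j, a j = W j.succ ∧ b j = W j.castSucc := by
  constructor
  · intro h
    refine ⟨Fin.cons x a, rfl, ?_, fun j => ⟨rfl, ?_⟩⟩
    · rw [h, Fin.snoc_last]
    · rw [h, Fin.snoc_castSucc]
  · rintro ⟨W, h0, hlast, hW⟩
    have hcons : (Fin.cons x a : Fin (m + 2) → α) = W := funext fun k =>
      Fin.cases (by rw [Fin.cons_zero, h0]) (fun j => by rw [Fin.cons_succ, (hW j).1]) k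
    have hsnoc : W = Fin.snoc b y := funext fun k =>
      Fin.lastCases (by rw [Fin.snoc_last, hlast]) (fun j => by rw [Fin.snoc_castSucc, (hW j).2]) k
    rw [hcons, hsnoc]

section DescendingCoeffs

variable {R : Type*} [Ring R]

noncomputable def ofDescCoeffs {m : ℕ} (e : Fin (m + 1) → R) : R[X] :=
  ∑ k, C (e k) * X ^ (m - k)

theorem coeff_ofDescCoeffs {m : ℕ} (e : Fin (m + 1) → R) (k : Fin (m + 1)) :
    (ofDescCoeffs e).coeff (m - k) = e k := by
  rw [ofDescCoeffs, finsetSum_coeff, Finset.sum_eq_single k]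
  · simp
  · intro l _ hlk
    rw [coeff_C_mul_X_pow, if_neg (by omega)]
  · simp

theorem ofDescCoeffs_injective {m : ℕ} : Function.Injective (ofDescCoeffs (R := R) (m := m)) :=
  fun e e' h => funext fun k => by rw [← coeff_ofDescCoeffs e, h, coeff_ofDescCoeffs]

theorem ofDescCoeffs_neg {m : ℕ} (e : Fin (m + 1) → R) :
    ofDescCoeffs (-e) = -ofDescCoeffs e := by
  simp [ofDescCoeffs, Finset.sum_neg_distrib]

theorem ofDescCoeffs_cons {m : ℕ} (x : R) (a : Fin (m + 1) → R) :
    ofDescCoeffs (Fin.cons x a : Fin (m + 2) → R) = C x * X ^ (m + 1) + ofDescCoeffs a := by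
  simp [ofDescCoeffs, Fin.sum_univ_succ]

theorem ofDescCoeffs_snoc {m : ℕ} (b : Fin (m + 1) → R) (y : R) :
    ofDescCoeffs (Fin.snoc b y : Fin (m + 2) → R) = X * ofDescCoeffs b + C y := by
  rw [ofDescCoeffs, ofDescCoeffs, Fin.sum_univ_castSucc, Finset.mul_sum]
  simp only [Fin.snoc_castSucc, Fin.snoc_last]
  congr 1
  · refine Finset.sum_congr rfl fun j _ => ?_
    rw [Fin.val_castSucc, show m + 1 - j = m - j + 1 by omega, pow_succ', ← mul_assoc,
      ← mul_assoc, X_mul_C]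
  · simp

theorem sum_X_pow_mul_pencil_eq_X_pow_mul_C_iff {u : ℕ} (a b : Fin (u + 1) → R) (p : R) :
    ∑ j : Fin (u + 1), X ^ (u - (j : ℕ)) * (C (a j) + X * C (b j)) = X ^ (u + 1) * C p ↔
      (Fin.cons (-p) a : Fin (u + 2) → R) = Fin.snoc (-b) 0 := by
  have hsum : ∑ j : Fin (u + 1), X ^ (u - (j : ℕ)) * (C (a j) + X * C (b j)) =
      ofDescCoeffs a + X * ofDescCoeffs b := by
    simp only [ofDescCoeffs, Finset.mul_sum, ← Finset.sum_add_distrib, mul_add]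
    refine Finset.sum_congr rfl fun j _ => ?_
    rw [X_pow_mul, X_pow_mul, mul_assoc]
  rw [hsum, ← ofDescCoeffs_injective.eq_iff, ofDescCoeffs_cons, ofDescCoeffs_snoc,
    ofDescCoeffs_neg, C_neg, C_0, neg_mul, ← X_pow_mul, mul_neg, add_zero,
    neg_add_eq_iff_eq_add, ← sub_eq_add_neg, eq_sub_iff_add_eq]

end DescendingCoeffs

section Pencil

variable {F : Type} [Field F]

theorem pencil_submatrix {m l m' l' : Type*} (A B : Matrix m l F) (r : m' → m) (c : l' → l) :
    (pencil A B).submatrix r c = pencil (A.submatrix r c) (B.submatrix r c) :=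
  rfl

theorem neg_X_smul_matC_add_matC {m l : Type*} (W W' : Matrix m l F) :
    -((X : F[X]) • matC W) + matC W' = pencil W' (-W) := by
  ext i j
  simp [pencil, matC]
  ring

theorem pencil_inj {m l : Type*} {A B A' B' : Matrix m l F} :
    pencil A B = pencil A' B' ↔ A = A' ∧ B = B' := by
  refine ⟨fun h => ⟨?_, ?_⟩, fun h => by rw [h.1, h.2]⟩ <;> ext i j
  · simpa [pencil, matC] using congrArg (fun M => (M i j).coeff 0) h
  · simpa [pencil, matC] using congrArg (fun M => (M i j).coeff 1) h

theorem matPolyEquiv_matC {ι : Type*} [Fintype ι] [DecidableEq ι] (A : Matrix ι ι F) :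
    matPolyEquiv (matC A) = C A :=
  matPolyEquiv_map_C A

theorem matPolyEquiv_pencil {ι : Type*} [Fintype ι] [DecidableEq ι] (A B : Matrix ι ι F) :
    matPolyEquiv (pencil A B) = C A + X * C B := by
  simp [pencil, matPolyEquiv_matC]

theorem mul_Lam {m : Type*} {u n : ℕ} (M : Matrix m (Fin (u + 1) × Fin n) F[X]) :
    M * Lam F u n =
      ∑ j : Fin (u + 1), (X : F[X]) ^ (u - (j : ℕ)) • M.submatrix id (Prod.mk j) := by
  ext r c
  simp [Matrix.mul_apply, Fintype.sum_prod_type, Lam, Matrix.sum_apply, mul_comm]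

end Pencil

/-- (`t = u+1 ≥ 1`.) A pencil `M₁₂(λ)` of size `n × tn` satisfies
`M₁₂(λ)(Λ_{t-1}(λ)⊗I_n) = λ^t P_d` iff there exist `W_0, …, W_t` with `W_0 = -P_d`,
`W_t = 0` and `j`-th block `M₁₂^{(j)}(λ) = -λ W_{j-1} + W_j` (blocks `j` 0-based below). -/
theorem stmt_12 {F : Type} [Field F] (n u : ℕ)
    (Pd : Matrix (Fin n) (Fin n) F)
    (A12 B12 : Matrix (Fin n) (Fin (u+1) × Fin n) F) :
    pencil A12 B12 * Lam F u n = (X : Polynomial F) ^ (u+1) • matC Pd ↔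
      ∃ W : Fin (u+2) → Matrix (Fin n) (Fin n) F,
        W 0 = -Pd ∧ W (Fin.last (u+1)) = 0 ∧
          ∀ j : Fin (u+1),
            (Matrix.of fun r c => pencil A12 B12 r (j, c)) =
              -((X : Polynomial F) • matC (W j.castSucc)) + matC (W j.succ) := by
  rw [mul_Lam, ← matPolyEquiv.injective.eq_iff, map_sum]
  simp only [pencil_submatrix, matPolyEquiv_map_smul, matPolyEquiv_pencil, matPolyEquiv_matC,
    Polynomial.map_pow, map_X]
  rw [sum_X_pow_mul_pencil_eq_X_pow_mul_C_iff, Fin.cons_eq_snoc_iff]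
  refine exists_congr fun W => and_congr_right' <| and_congr_right' <| forall_congr' fun j => ?_
  rw [neg_X_smul_matC_add_matC, show (Matrix.of fun r c => pencil A12 B12 r (j, c)) =
    pencil (A12.submatrix id (Prod.mk j)) (B12.submatrix id (Prod.mk j)) from rfl, pencil_inj,
    Pi.neg_apply, neg_eq_iff_eq_neg]
end

section
/- Let P(λ) = ∑_{k=0}^d λ^k P_k be a regular n×n matrix polynomial over a field F of odd degree d = 2s+1, let σ ∈ {1,−1}, and let L(λ) be the block Kronecker pencil built from a pencil λB+A of size (s+1)n×(s+1)n satisfying (Λ_s(λ)^T⊗I_n)(λB+A)(Λ_s(λ)⊗I_n) = P(λ). If λ0 ∈ F and z ∈ F^{dn} satisfy z ≠ 0 and L(λ0)z = 0, then the (s+1)-th n×n block x of z (the entries in positions sn+1, …, (s+1)n) satisfies x ≠ 0 and P(λ0)x = 0; that is, x is a right eigenvector of P with eigenvalue λ0. -/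
open Polynomial Matrix
open scoped Kronecker

/-!
Split `z = (w, y)` along the two block rows of `L(λ₀)`. The second row says
`(L_s(λ₀) ⊗ I_n) w = 0`, and the kernel of `L_s(λ₀)` is spanned by `Λ_s(λ₀)`, so
`w = (Λ_s(λ₀) ⊗ I_n) x` for the last block `x` of `w`. If `x = 0`, then `w = 0` and the first row
reduces to `(L_s(λ₀)ᵀ ⊗ I_n) y = 0`; as `L_s(λ₀)ᵀ` is injective, `y = 0`, contradicting `z ≠ 0`.
Multiplying the first row by `Λ_s(λ₀)ᵀ ⊗ I_n` and using `L_s(λ) Λ_s(λ) = 0` gives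
`P(λ₀) x = (Λ_s(λ₀)ᵀ ⊗ I_n)(λ₀B + A) w = -((L_s(λ₀) Λ_s(λ₀))ᵀ ⊗ I_n) y = 0`.
-/

section Kronecker

variable {R m l n : Type*} [CommSemiring R] [Fintype l] [Fintype n] [DecidableEq n]

theorem Matrix.kronecker_one_mulVec_apply (L : Matrix m l R) (w : l × n → R) (i : m) (r : n) :
    ((L ⊗ₖ (1 : Matrix n n R)) *ᵥ w) (i, r) = (L *ᵥ fun j => w (j, r)) i := by
  simp [mulVec, dotProduct, kroneckerMap_apply, Fintype.sum_prod_type, one_apply]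

end Kronecker

section EvalMat

variable {F : Type} [Field F] {m l o p : Type*}

theorem evalMat_zero (a : F) : evalMat a (0 : Matrix m l F[X]) = 0 := by
  ext
  simp [evalMat]

theorem evalMat_smul (a c : F) (M : Matrix m l F[X]) : evalMat a (c • M) = c • evalMat a M := by
  ext
  simp [evalMat]

theorem evalMat_mul [Fintype l] (a : F) (M : Matrix m l F[X]) (N : Matrix l o F[X]) :
    evalMat a (M * N) = evalMat a M * evalMat a N :=
  Matrix.map_mul (f := evalRingHom a)

theorem evalMat_transpose (a : F) (M : Matrix m l F[X]) :
    evalMat a Mᵀ = (evalMat a M)ᵀ :=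
  Matrix.transpose_map

theorem evalMat_fromBlocks (a : F) (A : Matrix m l F[X]) (B : Matrix m o F[X])
    (C : Matrix p l F[X]) (D : Matrix p o F[X]) :
    evalMat a (fromBlocks A B C D) =
      fromBlocks (evalMat a A) (evalMat a B) (evalMat a C) (evalMat a D) :=
  Matrix.fromBlocks_map ..

theorem evalMat_kronecker_one {n : Type*} [DecidableEq n] (a : F) (M : Matrix m l F[X]) :
    evalMat a (M ⊗ₖ (1 : Matrix n n F[X])) = evalMat a M ⊗ₖ (1 : Matrix n n F) := by
  ext ⟨i, r⟩ ⟨j, c⟩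
  by_cases h : r = c <;> simp [evalMat, kroneckerMap_apply, one_apply, h]

end EvalMat

section Lpen

variable {F : Type} [Field F] {s : ℕ}

theorem evalMat_Lpen_mulVec_apply (a : F) (v : Fin (s+1) → F) (i : Fin s) :
    (evalMat a (Lpen F s) *ᵥ v) i = -v i.castSucc + a * v i.succ := by
  rw [mulVec, dotProduct, Fintype.sum_eq_add i.castSucc i.succ (Fin.castSucc_lt_succ).ne]
  · simp [evalMat, Lpen]
  · rintro j ⟨h₀, h₁⟩
    rw [Ne, Fin.ext_iff, Fin.val_castSucc] at h₀
    rw [Ne, Fin.ext_iff, Fin.val_succ] at h₁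
    simp [evalMat, Lpen, h₀, h₁]

theorem evalMat_Lpen_mulVec_eq_zero_iff (a : F) (v : Fin (s+1) → F) :
    evalMat a (Lpen F s) *ᵥ v = 0 ↔ ∀ j, v j = a ^ (s - j) * v (Fin.last s) := by
  have hpow (i : Fin s) : a ^ (s - i.castSucc) = a * a ^ (s - i.succ) := by
    rw [← pow_succ', Fin.val_castSucc, Fin.val_succ]
    congr 1
    omega
  simp only [funext_iff, Pi.zero_apply, evalMat_Lpen_mulVec_apply, neg_add_eq_zero]
  refine ⟨fun h j => ?_, fun h i => ?_⟩
  · induction j using Fin.reverseInduction with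
    | last => simp
    | cast i ih => rw [h, ih, hpow, mul_assoc]
  · rw [h i.castSucc, h i.succ, hpow, mul_assoc]

theorem eq_zero_of_evalMat_Lpen_transpose_mulVec_eq_zero (a : F) {y : Fin s → F}
    (hy : (evalMat a (Lpen F s))ᵀ *ᵥ y = 0) : y = 0 := by
  funext k
  -- column `k` of `L_s(a)` has `-1` in row `k` and its only other entry in row `k - 1`
  induction k using WellFoundedLT.induction with
  | _ k ih =>
    have hk := congrFun hy k.castSucc
    rw [mulVec, dotProduct, Finset.sum_eq_single k] at hk
    · simpa [evalMat, Lpen] using hk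
    · intro i _ hik
      rcases lt_or_gt_of_ne hik with hlt | hgt
      · simp [ih i hlt]
      · have h₀ : (k : ℕ) ≠ i := by omega
        have h₁ : (k : ℕ) ≠ i + 1 := by omega
        simp [evalMat, Lpen, h₀, h₁]
    · simp

end Lpen

section BlockKronecker

variable {F : Type} [Field F] {s n : ℕ}

theorem evalMat_Lam_mulVec_apply (a : F) (x : Fin n → F) (j : Fin (s+1)) (r : Fin n) :
    (evalMat a (Lam F s n) *ᵥ x) (j, r) = a ^ (s - j) * x r := by
  simp [mulVec, dotProduct, evalMat, Lam, apply_ite (Polynomial.eval a)]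

theorem evalMat_Lpen_kronecker_mulVec_eq_zero_iff (a : F) (w : Fin (s+1) × Fin n → F) :
    evalMat a (Lpen F s ⊗ₖ (1 : Matrix (Fin n) (Fin n) F[X])) *ᵥ w = 0 ↔
      w = evalMat a (Lam F s n) *ᵥ fun r => w (Fin.last s, r) := by
  simp only [evalMat_kronecker_one, funext_iff, Prod.forall, Pi.zero_apply,
    Matrix.kronecker_one_mulVec_apply, evalMat_Lam_mulVec_apply]
  rw [forall_comm]
  exact (forall_congr' fun r => funext_iff.symm.trans (evalMat_Lpen_mulVec_eq_zero_iff a _)).trans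
    forall_comm

theorem evalMat_Lpen_kronecker_mul_Lam (a : F) :
    evalMat a (Lpen F s ⊗ₖ (1 : Matrix (Fin n) (Fin n) F[X])) * evalMat a (Lam F s n) = 0 := by
  refine Matrix.ext_of_mulVec_single fun c => ?_
  rw [← mulVec_mulVec, zero_mulVec, evalMat_Lpen_kronecker_mulVec_eq_zero_iff]
  congr 1
  funext r
  simp [evalMat_Lam_mulVec_apply]

theorem eq_zero_of_evalMat_Lpen_kronecker_transpose_mulVec_eq_zero (a : F)
    {y : Fin s × Fin n → F}
    (hy : (evalMat a (Lpen F s ⊗ₖ (1 : Matrix (Fin n) (Fin n) F[X])))ᵀ *ᵥ y = 0) : y = 0 := by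
  rw [evalMat_kronecker_one, ← kroneckerMap_transpose, transpose_one] at hy
  funext ⟨i, r⟩
  have hcol : (fun i => y (i, r)) = 0 := by
    refine eq_zero_of_evalMat_Lpen_transpose_mulVec_eq_zero a (funext fun j => ?_)
    simpa [Matrix.kronecker_one_mulVec_apply] using congrFun hy (j, r)
  exact congrFun hcol i

theorem evalMat_blockKron_mulVec_eq_zero_iff (a σ : F) (hσ : σ ≠ 0)
    (M : Matrix (Fin (s+1) × Fin n) (Fin (s+1) × Fin n) F[X])
    (z : (Fin (s+1) × Fin n) ⊕ (Fin s × Fin n) → F) :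
    evalMat a (blockKron F s n σ M) *ᵥ z = 0 ↔
      evalMat a M *ᵥ (z ∘ Sum.inl) +
          (evalMat a (Lpen F s ⊗ₖ (1 : Matrix (Fin n) (Fin n) F[X])))ᵀ *ᵥ (z ∘ Sum.inr) = 0 ∧
        evalMat a (Lpen F s ⊗ₖ (1 : Matrix (Fin n) (Fin n) F[X])) *ᵥ (z ∘ Sum.inl) = 0 := by
  rw [blockKron, evalMat_fromBlocks, fromBlocks_mulVec, evalMat_smul, evalMat_transpose,
    evalMat_zero, zero_mulVec, add_zero, smul_mulVec]
  simp only [funext_iff, Sum.forall, Sum.elim_inl, Sum.elim_inr, Pi.zero_apply, Pi.smul_apply,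
    smul_eq_zero, hσ, false_or]

end BlockKronecker

theorem stmt_14_general {F : Type} [Field F] (n s : ℕ)
    (Pc : ℕ → Matrix (Fin n) (Fin n) F)
    (σ : F) (hσ : σ = 1 ∨ σ = -1)
    (A B : Matrix (Fin (s+1) × Fin n) (Fin (s+1) × Fin n) F)
    (hM : (Lam F s n)ᵀ * pencil A B * Lam F s n = polyOfCoeffs (2*s+1) Pc)
    (lam0 : F) (z : ((Fin (s+1) × Fin n) ⊕ (Fin s × Fin n)) → F)
    (hz : z ≠ 0)
    (hLz : (evalMat lam0 (blockKron F s n σ (pencil A B))).mulVec z = 0) :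
    (fun r => z (Sum.inl (Fin.last s, r))) ≠ 0 ∧
      (evalMat lam0 (polyOfCoeffs (2*s+1) Pc)).mulVec
        (fun r => z (Sum.inl (Fin.last s, r))) = 0 := by
  have hσ0 : σ ≠ 0 := by rcases hσ with rfl | rfl <;> norm_num
  set x : Fin n → F := fun r => z (Sum.inl (Fin.last s, r))
  set K := evalMat lam0 (Lpen F s ⊗ₖ (1 : Matrix (Fin n) (Fin n) F[X]))
  set Λ := evalMat lam0 (Lam F s n)
  obtain ⟨htop, hbot⟩ := (evalMat_blockKron_mulVec_eq_zero_iff lam0 σ hσ0 _ z).1 hLz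
  have hw : z ∘ Sum.inl = Λ *ᵥ x := (evalMat_Lpen_kronecker_mulVec_eq_zero_iff lam0 _).1 hbot
  refine ⟨fun hx => hz ?_, ?_⟩
  · have hw0 : z ∘ Sum.inl = 0 := by rw [hw, hx, mulVec_zero]
    have hy0 : z ∘ Sum.inr = 0 :=
      eq_zero_of_evalMat_Lpen_kronecker_transpose_mulVec_eq_zero lam0 (by simpa [hw0] using htop)
    ext (p | p)
    · exact congrFun hw0 p
    · exact congrFun hy0 p
  · calc evalMat lam0 (polyOfCoeffs (2*s+1) Pc) *ᵥ x
        = Λᵀ *ᵥ (evalMat lam0 (pencil A B) *ᵥ (z ∘ Sum.inl)) := by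
          rw [← hM, evalMat_mul, evalMat_mul, evalMat_transpose, hw, mulVec_mulVec, mulVec_mulVec]
      _ = -((K * Λ)ᵀ *ᵥ (z ∘ Sum.inr)) := by
          rw [eq_neg_of_add_eq_zero_left htop, mulVec_neg, transpose_mul, mulVec_mulVec]
      _ = 0 := by rw [evalMat_Lpen_kronecker_mul_Lam, transpose_zero, zero_mulVec, neg_zero]

/-- (Eigenvector recovery at finite eigenvalues, odd degree `d = 2s+1`.)
If `z ≠ 0` and `L(λ0)z = 0` for a block Kronecker pencil `L` of a regular `P`, then the
`(s+1)`-th `n × n` block of `z` is a right eigenvector of `P` with eigenvalue `λ0`. -/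
theorem stmt_14 {F : Type} [Field F] (n s : ℕ)
    (Pc : ℕ → Matrix (Fin n) (Fin n) F)
    (hdeg : Pc (2*s+1) ≠ 0)
    (hreg : (polyOfCoeffs (2*s+1) Pc).det ≠ 0)
    (σ : F) (hσ : σ = 1 ∨ σ = -1)
    (A B : Matrix (Fin (s+1) × Fin n) (Fin (s+1) × Fin n) F)
    (hM : (Lam F s n)ᵀ * pencil A B * Lam F s n = polyOfCoeffs (2*s+1) Pc)
    (lam0 : F) (z : ((Fin (s+1) × Fin n) ⊕ (Fin s × Fin n)) → F)
    (hz : z ≠ 0)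
    (hLz : (evalMat lam0 (blockKron F s n σ (pencil A B))).mulVec z = 0) :
    (fun r => z (Sum.inl (Fin.last s, r))) ≠ 0 ∧
      (evalMat lam0 (polyOfCoeffs (2*s+1) Pc)).mulVec
        (fun r => z (Sum.inl (Fin.last s, r))) = 0 :=
  stmt_14_general n s Pc σ hσ A B hM lam0 z hz hLz
end
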